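/- arXiv:cs/0508091 — 2 statements merged into one kernel-verified Lean document; each statement's English description precedes it below -/
import Mathlib

section
/- Equivalence of the three semantics: if every aggregation operator occurring in the clauses of P is Scott-continuous, then the success-set interpretation SS(P), defined by SS(P)(a) = ⨆ { v ∈ L | Prov(a, v) }, satisfies SS(P) = lfp(T_P) = lm(P), where lfp(T_P) is the least fixed point of T_P and lm(P) is the pointwise infimum of all models of P. -/
/-- A fuzzy clause: a head atom, a finite tuple of body atoms, and an
aggregation operator over truth values. -/
structure FuzzyClause (A : Type*) (L : Type*) where
  n : ℕ
  head : A
  body : Fin n → A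
  agg : (Fin n → L) → L

/-- A fuzzy program: a set of facts and a set of clauses whose aggregation
operators are monotone (w.r.t. the pointwise order on argument tuples). -/
structure FuzzyProgram (A : Type*) (L : Type*) [CompleteLattice L] where
  facts : Set (A × L)
  clauses : Set (FuzzyClause A L)
  agg_mono : ∀ c ∈ clauses, Monotone c.agg

variable {A : Type*} {L : Type*} [CompleteLattice L]

/-- `I` is a model of `P` with default assignment `d`. -/
def IsModel (d : A → L) (P : FuzzyProgram A L) (I : A → L) : Prop :=
  (∀ a, d a ≤ I a) ∧
  (∀ p ∈ P.facts, p.2 ≤ I p.1) ∧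
  (∀ c ∈ P.clauses, c.agg (fun i => I (c.body i)) ≤ I c.head)

/-- The immediate-consequence operator `T_P`. -/
def TP (d : A → L) (P : FuzzyProgram A L) (I : A → L) : A → L :=
  fun a =>
    d a ⊔ sSup {v | (a, v) ∈ P.facts} ⊔
      sSup {w | ∃ c ∈ P.clauses, c.head = a ∧ w = c.agg (fun i => I (c.body i))}

/-- An aggregation operator is Scott-continuous if it preserves suprema of
nonempty directed sets of argument tuples (pointwise order). -/
def ScottContinuous' {n : ℕ} (F : (Fin n → L) → L) : Prop :=
  ∀ S : Set (Fin n → L), S.Nonempty → DirectedOn (· ≤ ·) S →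
    F (sSup S) = ⨆ x ∈ S, F x

/-- The derivability relation: the least relation closed under the fact,
clause, default and join rules. -/
inductive Prov (d : A → L) (P : FuzzyProgram A L) : A → L → Prop
  | fact (a : A) (v : L) : (a, v) ∈ P.facts → Prov d P a v
  | clause (c : FuzzyClause A L) (hc : c ∈ P.clauses) (w : Fin c.n → L) :
      (∀ i, Prov d P (c.body i) (w i)) → Prov d P c.head (c.agg w)
  | dflt (a : A) : Prov d P a (d a)
  | join (a : A) (v₁ v₂ : L) : Prov d P a v₁ → Prov d P a v₂ →
      Prov d P a (v₁ ⊔ v₂)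

section Aux
variable {A : Type*} {L : Type*} [CompleteLattice L]

lemma model_iff_prefixed (d : A → L) (P : FuzzyProgram A L) (I : A → L) :
    IsModel d P I ↔ TP d P I ≤ I := by
  constructor
  · rintro ⟨h1, h2, h3⟩ a
    simp only [TP, sup_le_iff, sSup_le_iff]
    refine ⟨⟨h1 a, fun v hv => h2 (a, v) hv⟩, ?_⟩
    rintro w ⟨c, hc, rfl, rfl⟩
    exact h3 c hc
  · intro h
    have h' : ∀ a, d a ⊔ sSup {v | (a, v) ∈ P.facts} ⊔
        sSup {w | ∃ c ∈ P.clauses, c.head = a ∧ w = c.agg (fun i => I (c.body i))} ≤ I a := h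
    refine ⟨fun a => le_trans (le_sup_left.trans le_sup_left) (h' a),
      fun p hp => ?_, fun c hc => ?_⟩
    · exact le_trans (le_trans (le_sSup hp) (le_sup_right.trans le_sup_left)) (h' p.1)
    · have hmem : c.agg (fun i => I (c.body i)) ∈
        {w | ∃ c' ∈ P.clauses, c'.head = c.head ∧
          w = c'.agg (fun i => I (c'.body i))} := ⟨c, hc, rfl, rfl⟩
      exact le_trans (le_trans (le_sSup hmem) le_sup_right) (h' c.head)

lemma prov_le_model (d : A → L) (P : FuzzyProgram A L) (I : A → L)
    (hI : IsModel d P I) {a : A} {v : L} (h : Prov d P a v) : v ≤ I a := by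
  induction h with
  | fact a v hv => exact hI.2.1 (a, v) hv
  | clause c hc w _ ih =>
      exact le_trans (P.agg_mono c hc (fun i => ih i)) (hI.2.2 c hc)
  | dflt a => exact hI.1 a
  | join a v₁ v₂ _ _ ih₁ ih₂ => exact sup_le ih₁ ih₂

end Aux
/-- Equivalence of the three semantics: the success-set interpretation equals
the least fixed point of `T_P`, which equals the least model of `P`. -/
theorem three_semantics_equivalent (d : A → L) (P : FuzzyProgram A L)
    (hsc : ∀ c ∈ P.clauses, ScottContinuous' c.agg)
    (hm : Monotone (TP d P)) :
    (fun a => sSup {v | Prov d P a v}) = OrderHom.lfp ⟨TP d P, hm⟩ ∧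
    OrderHom.lfp ⟨TP d P, hm⟩ =
      (fun a => ⨅ I ∈ {I : A → L | IsModel d P I}, I a) := by
  set f : (A → L) →o (A → L) := ⟨TP d P, hm⟩ with hf
  set SS : A → L := fun a => sSup {v | Prov d P a v} with hSS
  -- lfp is a model
  have hlfp_model : IsModel d P (OrderHom.lfp f) := by
    rw [model_iff_prefixed]
    exact le_of_eq (OrderHom.map_lfp f)
  -- SS is a model
  have hSS_model : IsModel d P SS := by
    refine ⟨fun a => le_sSup (Prov.dflt a), fun p hp => le_sSup (Prov.fact p.1 p.2 hp),
      fun c hc => ?_⟩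
    set S : Set (Fin c.n → L) := {w | ∀ i, Prov d P (c.body i) (w i)} with hS
    have hne : S.Nonempty := ⟨fun i => d (c.body i), fun i => Prov.dflt _⟩
    have hdir : DirectedOn (· ≤ ·) S := by
      intro w₁ h₁ w₂ h₂
      exact ⟨w₁ ⊔ w₂, fun i => Prov.join _ _ _ (h₁ i) (h₂ i),
        le_sup_left, le_sup_right⟩
    have hsup : sSup S = fun i => SS (c.body i) := by
      funext i
      rw [sSup_apply]
      apply le_antisymm
      · exact iSup_le fun ⟨w, hw⟩ => le_sSup (hw i)
      · apply sSup_le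
        intro v hv
        classical
        refine le_trans ?_ (le_iSup _
          (⟨fun j => if j = i then v else d (c.body j), fun j => ?_⟩ : S))
        · simp
        · by_cases h : j = i
          · subst h; simpa using hv
          · simpa [h] using Prov.dflt (d := d) (P := P) (c.body j)
    calc c.agg (fun i => SS (c.body i)) = c.agg (sSup S) := by rw [hsup]
      _ = ⨆ w ∈ S, c.agg w := hsc c hc S hne hdir
      _ ≤ SS c.head := by
          apply iSup_le; intro w; apply iSup_le; intro hw
          exact le_sSup (Prov.clause c hc w hw)
  have h1 : SS = OrderHom.lfp f := by
    apply le_antisymm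
    · intro a
      exact sSup_le fun v hv => prov_le_model d P _ hlfp_model hv
    · exact OrderHom.lfp_le f ((model_iff_prefixed d P SS).mp hSS_model)
  have h2 : OrderHom.lfp f = sInf {I | IsModel d P I} := by
    apply le_antisymm
    · exact le_sInf fun I hI => OrderHom.lfp_le f ((model_iff_prefixed d P I).mp hI)
    · exact sInf_le hlfp_model
  refine ⟨h1, ?_⟩
  rw [h2]
  funext a
  rw [sInf_apply]
  exact iInf_subtype'' {I : A → L | IsModel d P I} (fun I => I a)
end

section
/- Depth-bounded completeness: suppose every aggregation operator F occurring in the clauses of P is Scott-continuous and satisfies F(⊥,…,⊥) = ⊥. Then for every n ∈ ℕ and every atom a ∈ A, T_Pⁿ(⊥)(a) = ⨆ { v ∈ L | Provₙ(a, v) }, where ⊥ is the bottom interpretation, T_Pⁿ denotes n-fold iteration of T_P, and Provₙ is the depth-bounded derivability relation closed additionally under binary joins. -/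
variable {A : Type*} {L : Type*} [CompleteLattice L]

/-- Depth-bounded derivability, closed additionally under binary joins:
`ProvN d P n a v` holds for `n = m + 1` iff it follows from the fact, default
and clause rules (the clause rule referring to depth `m` for the body) or is
a join of two values derivable at depth `m + 1`; `ProvN d P 0` is empty. -/
inductive ProvN (d : A → L) (P : FuzzyProgram A L) : ℕ → A → L → Prop
  | fact (n : ℕ) (a : A) (v : L) : (a, v) ∈ P.facts → ProvN d P (n + 1) a v
  | dflt (n : ℕ) (a : A) : ProvN d P (n + 1) a (d a)
  | clause (n : ℕ) (c : FuzzyClause A L) (hc : c ∈ P.clauses) (w : Fin c.n → L) :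
      (∀ i, ProvN d P n (c.body i) (w i)) → ProvN d P (n + 1) c.head (c.agg w)
  | join (n : ℕ) (a : A) (v₁ v₂ : L) : ProvN d P (n + 1) a v₁ →
      ProvN d P (n + 1) a v₂ → ProvN d P (n + 1) a (v₁ ⊔ v₂)

lemma provN_sound (d : A → L) (P : FuzzyProgram A L) :
    ∀ {n : ℕ} {a : A} {v : L}, ProvN d P n a v → v ≤ (TP d P)^[n] ⊥ a := by
  intro n a v h
  induction h with
  | fact n a v hv =>
      rw [Function.iterate_succ_apply', TP]
      exact le_trans (le_trans (le_sSup hv) le_sup_right) le_sup_left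
  | dflt n a =>
      rw [Function.iterate_succ_apply', TP]
      exact le_trans le_sup_left le_sup_left
  | clause n c hc w hw ih =>
      rw [Function.iterate_succ_apply', TP]
      refine le_trans ?_ le_sup_right
      refine le_trans (P.agg_mono c hc (fun i => ih i)) (le_sSup ?_)
      exact ⟨c, hc, rfl, rfl⟩
  | join n a v₁ v₂ h₁ h₂ ih₁ ih₂ =>
      exact sup_le ih₁ ih₂

/-- Depth-bounded completeness: if every aggregation operator of `P` is
Scott-continuous and preserves bottom, then the `n`-th iterate of `T_P` on
the bottom interpretation is exactly the supremum of the values derivable in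
depth `n`. -/
theorem iterate_eq_sSup_provN (d : A → L) (P : FuzzyProgram A L)
    (hsc : ∀ c ∈ P.clauses, ScottContinuous' c.agg)
    (hbot : ∀ c ∈ P.clauses, c.agg ⊥ = ⊥) :
    ∀ (n : ℕ) (a : A), (TP d P)^[n] ⊥ a = sSup {v | ProvN d P n a v} := by
  intro n
  induction n with
  | zero =>
      intro a
      have he : {v | ProvN d P 0 a v} = ∅ := by
        ext v; simp only [Set.mem_setOf_eq, Set.mem_empty_iff_false, iff_false]
        intro h; cases h
      simp [he]
  | succ n ih =>
      intro a
      rw [Function.iterate_succ_apply']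
      set I : A → L := (TP d P)^[n] ⊥ with hI
      apply le_antisymm
      · rw [TP]
        refine sup_le (sup_le ?_ ?_) ?_
        · exact le_sSup (ProvN.dflt n a)
        · exact sSup_le fun v hv => le_sSup (ProvN.fact n a v hv)
        · refine sSup_le ?_
          rintro w ⟨c, hc, rfl, rfl⟩
          rcases Nat.eq_zero_or_pos n with hn | hn
          · subst hn
            have : (fun i => I (c.body i)) = ⊥ := by
              funext i; simp [hI]
            rw [this, hbot c hc]
            exact bot_le
          · obtain ⟨m, rfl⟩ := Nat.exists_eq_add_of_lt hn
            simp only [Nat.zero_add] at *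
            set T : Set (Fin c.n → L) :=
              {w | ∀ i, ProvN d P (m + 1) (c.body i) (w i)} with hT
            have hTne : T.Nonempty := ⟨fun i => d (c.body i), fun i => ProvN.dflt m _⟩
            have hTdir : DirectedOn (· ≤ ·) T := by
              rintro w₁ hw₁ w₂ hw₂
              exact ⟨w₁ ⊔ w₂, fun i => ProvN.join m _ _ _ (hw₁ i) (hw₂ i),
                le_sup_left, le_sup_right⟩
            have hsup : sSup T = fun i => I (c.body i) := by
              funext i
              rw [sSup_apply]
              apply le_antisymm
              · refine iSup_le fun w => ?_
                rw [ih]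
                exact le_sSup (w.2 i)
              · rw [ih]
                refine sSup_le fun v hv => ?_
                have hmem : Function.update (fun j => d (c.body j)) i v ∈ T := by
                  intro j
                  rcases eq_or_ne j i with rfl | hji
                  · simpa using hv
                  · rw [Function.update_of_ne hji]
                    exact ProvN.dflt m _
                have := le_iSup (fun (w : T) => (w : Fin c.n → L) i)
                  ⟨Function.update (fun j => d (c.body j)) i v, hmem⟩
                simpa using this
            calc c.agg (fun i => I (c.body i)) = c.agg (sSup T) := by rw [hsup]
              _ = ⨆ w ∈ T, c.agg w := hsc c hc T hTne hTdir
              _ ≤ sSup {v | ProvN d P (m + 1 + 1) c.head v} := by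
                  refine iSup_le fun w => iSup_le fun hw => le_sSup ?_
                  exact ProvN.clause (m + 1) c hc w hw
      · refine sSup_le fun v hv => ?_
        have := provN_sound d P hv
        rwa [Function.iterate_succ_apply'] at this
end
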